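/- Monotone complexity is bounded below via a supermartingale: if ψ is the optimal monotone machine defining Km and Q(x) = B_{1/2}(⋃{Γ_p : x ⊑ ψ(p)}), then Q(Λ) ≤ 1 and Q(x) ≥ Q(x0) + Q(x1) for all strings x, so M(x) = 2^{|x|} Q(x) is a supermartingale, and M(x) ≥ 2^{|x| − Km(x)} for all x; hence the deficiency dm(x) = |x| − Km(x) satisfies dm(x) ≤ log₂ M(x). -/
import Mathlib


open MeasureTheory Filter

/-- The cylinder set determined by a finite binary string. -/
def Cyl (x : List Bool) : Set (ℕ → Bool) :=
  {ω | ∀ i : Fin x.length, ω i = x.get i}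

/-- The length-`n` prefix of an infinite binary sequence. -/
def Pre (ω : ℕ → Bool) (n : ℕ) : List Bool := (List.range n).map ω

/-- `x` is a prefix of the infinite sequence `ω`. -/
def PrefixOf (x : List Bool) (ω : ℕ → Bool) : Prop :=
  ∀ i : Fin x.length, ω i = x.get i

/-- `μ` is the uniform Bernoulli measure `B_{1/2}` on Cantor space. -/
def UniformMeasure (μ : Measure (ℕ → Bool)) : Prop :=
  ∀ x : List Bool, μ (Cyl x) = (2 : ENNReal)⁻¹ ^ x.length

/-- A Solovay test: a computable sequence of strings whose weights form a convergent series. -/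
def SolovayTest (x : ℕ → List Bool) : Prop :=
  Computable x ∧ Summable (fun n => (2 : ℝ) ^ (-((x n).length : ℤ)))

/-- `ω` passes the Solovay test `x`: only finitely many `x n` are prefixes of `ω`. -/
def PassesSolovay (x : ℕ → List Bool) (ω : ℕ → Bool) : Prop :=
  {n | PrefixOf (x n) ω}.Finite

/-- A total Solovay test: the series converges with a computable rate of convergence. -/
def TotalSolovayTest (x : ℕ → List Bool) : Prop :=
  SolovayTest x ∧ ∃ m : ℚ → ℕ, Computable m ∧
    ∀ δ : ℚ, 0 < δ → ∑' n : {n : ℕ // m δ ≤ n}, (2 : ℝ) ^ (-((x n.1).length : ℤ)) ≤ (δ : ℝ)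

/-- The effectively open set enumerated by the `n`-th row of `f`. -/
def EffOpen (f : ℕ → ℕ → List Bool) (n : ℕ) : Set (ℕ → Bool) := ⋃ i, Cyl (f n i)

/-- A Martin-Löf test with respect to `μ`. -/
def MLTest (μ : Measure (ℕ → Bool)) (f : ℕ → ℕ → List Bool) : Prop :=
  Computable₂ f ∧ ∀ n, μ (EffOpen f n) ≤ (2 : ENNReal)⁻¹ ^ n

/-- A Schnorr test: a Martin-Löf test whose measures are uniformly computable reals. -/
def SchnorrTest (μ : Measure (ℕ → Bool)) (f : ℕ → ℕ → List Bool) : Prop :=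
  MLTest μ f ∧ ∃ g : ℕ → ℚ → ℚ, Computable₂ g ∧
    ∀ (n : ℕ) (ε : ℚ), 0 < ε → |(g n ε : ℝ) - (μ (EffOpen f n)).toReal| ≤ (ε : ℝ)

/-- Martin-Löf randomness with respect to `μ`. -/
def MLRandom (μ : Measure (ℕ → Bool)) (ω : ℕ → Bool) : Prop :=
  ∀ f, MLTest μ f → ∃ n, ω ∉ EffOpen f n

/-- Schnorr randomness with respect to `μ`. -/
def SchnorrRandom (μ : Measure (ℕ → Bool)) (ω : ℕ → Bool) : Prop :=
  ∀ f, SchnorrTest μ f → ∃ n, ω ∉ EffOpen f n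

/-- A monotone machine: a partial computable monotone map on binary strings. -/
def MonotoneMachine (ψ : List Bool →. List Bool) : Prop :=
  Partrec ψ ∧ ∀ p p' y y', y ∈ ψ p → y' ∈ ψ p' → p <+: p' → (y <+: y' ∨ y' <+: y)

/-- `Km` is the monotone Kolmogorov complexity determined by some optimal monotone machine. -/
def IsKm (Km : List Bool → ℕ) : Prop :=
  ∃ ψ : List Bool →. List Bool, MonotoneMachine ψ ∧
    (∀ x : List Bool, ∃ p y, y ∈ ψ p ∧ x <+: y ∧ p.length = Km x) ∧
    (∀ x p y, y ∈ ψ p → x <+: y → Km x ≤ p.length) ∧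
    (∀ ψ' : List Bool →. List Bool, MonotoneMachine ψ' →
      ∃ c : ℕ, ∀ x p y, y ∈ ψ' p → x <+: y → Km x ≤ p.length + c)

/-- A computable real-valued function on Cantor space. -/
def ComputableRealFn (f : (ℕ → Bool) → ℝ) : Prop :=
  ∃ F : List Bool → ℚ → ℚ, ∃ k : ℚ → ℕ, Computable₂ F ∧ Computable k ∧
    ∀ (ω : ℕ → Bool) (ε : ℚ), 0 < ε → |(F (Pre ω (k ε)) ε : ℝ) - f ω| ≤ (ε : ℝ)

/-- A computable transformation of Cantor space, induced by a monotone machine. -/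
def ComputableTrans (T : (ℕ → Bool) → (ℕ → Bool)) : Prop :=
  ∃ ψ : List Bool →. List Bool, MonotoneMachine ψ ∧
    ∀ ω : ℕ → Bool, (∀ n y, y ∈ ψ (Pre ω n) → y = Pre (T ω) y.length) ∧
      (∀ k, ∃ n y, y ∈ ψ (Pre ω n) ∧ k ≤ y.length)

/-- `Q x`: the measure of the set of programs producing an extension of `x` on machine `ψ`. -/
noncomputable def Qfn (μ : Measure (ℕ → Bool)) (ψ : List Bool →. List Bool)
    (x : List Bool) : ℝ :=
  (μ (⋃ p ∈ {p : List Bool | ∃ y, y ∈ ψ p ∧ x <+: y}, Cyl p)).toReal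

/-- `M x = 2^{|x|} Q x`. -/
noncomputable def Mfn (μ : Measure (ℕ → Bool)) (ψ : List Bool →. List Bool)
    (x : List Bool) : ℝ :=
  2 ^ x.length * Qfn μ ψ x


lemma measurable_cyl (x : List Bool) : MeasurableSet (Cyl x) := by
  have : Cyl x = ⋂ i : Fin x.length, (fun ω : ℕ → Bool => ω i) ⁻¹' {x.get i} := by
    ext ω; simp [Cyl]
  rw [this]
  exact MeasurableSet.iInter fun i => (measurable_pi_apply _) (by trivial)

lemma cyl_comparable {p p' : List Bool} {ω : ℕ → Bool} (h : ω ∈ Cyl p) (h' : ω ∈ Cyl p') :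
    p <+: p' ∨ p' <+: p := by
  rcases le_total p.length p'.length with hl | hl
  · left
    refine List.prefix_iff_eq_take.2 (List.ext_get (by simp [hl.antisymm, Nat.min_eq_left hl]) ?_).symm
    intro i h1 h2
    have e1 := h ⟨i, by simpa using h2⟩
    have e2 := h' ⟨i, lt_of_lt_of_le (by simpa using h2) hl⟩
    simp only [List.get_eq_getElem] at e1 e2
    simp [List.getElem_take, ← e1, ← e2]
  · right
    refine List.prefix_iff_eq_take.2 (List.ext_get (by simp [Nat.min_eq_left hl]) ?_).symm
    intro i h1 h2
    have e1 := h' ⟨i, by simpa using h2⟩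
    have e2 := h ⟨i, lt_of_lt_of_le (by simpa using h2) hl⟩
    simp only [List.get_eq_getElem] at e1 e2
    simp [List.getElem_take, ← e1, ← e2]

/-- the deficiency of randomness is bounded by the logarithm of a
supermartingale: `Q` is a semimeasure, `M = 2^{|x|} Q x` is a supermartingale, and
`M x ≥ 2^{|x| − Km x}`, hence `dm x = |x| − Km x ≤ log₂ M x`. -/
theorem deficiency_bounded_by_supermartingale
    (μ : Measure (ℕ → Bool)) (hμ : UniformMeasure μ) [IsProbabilityMeasure μ]
    (Km : List Bool → ℕ) (ψ : List Bool →. List Bool) (hψ : MonotoneMachine ψ)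
    (hKm₁ : ∀ x : List Bool, ∃ p y, y ∈ ψ p ∧ x <+: y ∧ p.length = Km x)
    (hKm₂ : ∀ x p y, y ∈ ψ p → x <+: y → Km x ≤ p.length) :
    Qfn μ ψ [] ≤ 1 ∧
    (∀ x : List Bool, Qfn μ ψ (x ++ [false]) + Qfn μ ψ (x ++ [true]) ≤ Qfn μ ψ x) ∧
    Mfn μ ψ [] ≤ 1 ∧
    (∀ x : List Bool, (Mfn μ ψ (x ++ [false]) + Mfn μ ψ (x ++ [true])) / 2 ≤ Mfn μ ψ x) ∧
    (∀ x : List Bool, (2 : ℝ) ^ ((x.length : ℤ) - Km x) ≤ Mfn μ ψ x) ∧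
    (∀ x : List Bool, (x.length : ℝ) - Km x ≤ Real.logb 2 (Mfn μ ψ x)) := by
  obtain ⟨-, hmono⟩ := hψ
  set S : List Bool → Set (List Bool) := fun x => {p | ∃ y, y ∈ ψ p ∧ x <+: y} with hS
  set U : List Bool → Set (ℕ → Bool) := fun x => ⋃ p ∈ S x, Cyl p with hUdef
  have hQdef : ∀ x, Qfn μ ψ x = (μ (U x)).toReal := fun x => rfl
  have hUm : ∀ x, MeasurableSet (U x) := fun x =>
    MeasurableSet.biUnion (Set.to_countable _) fun p _ => measurable_cyl p
  have hne : ∀ x, μ (U x) ≠ ⊤ := fun x => measure_ne_top μ _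
  have hQ1 : ∀ x, Qfn μ ψ x ≤ 1 := by
    intro x
    rw [hQdef]
    calc (μ (U x)).toReal ≤ (1 : ENNReal).toReal :=
          ENNReal.toReal_mono ENNReal.one_ne_top prob_le_one
    _ = 1 := by simp
  have hUmono : ∀ (x : List Bool) (b : Bool), U (x ++ [b]) ⊆ U x := by
    intro x b
    apply Set.biUnion_subset_biUnion_left
    rintro p ⟨y, hy, hxy⟩
    exact ⟨y, hy, (List.prefix_append x [b]).trans hxy⟩
  have hdisj : ∀ x : List Bool, Disjoint (U (x ++ [false])) (U (x ++ [true])) := by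
    intro x
    rw [Set.disjoint_left]
    rintro ω h0 h1
    simp only [hUdef, Set.mem_iUnion, exists_prop] at h0 h1
    obtain ⟨p, ⟨y, hy, hxy⟩, hωp⟩ := h0
    obtain ⟨p', ⟨y', hy', hxy'⟩, hωp'⟩ := h1
    have hyy : y <+: y' ∨ y' <+: y := by
      rcases cyl_comparable hωp hωp' with h | h
      · exact hmono p p' y y' hy hy' h
      · exact (hmono p' p y' y hy' hy h).symm
    have hz : ∃ z : List Bool, x ++ [false] <+: z ∧ x ++ [true] <+: z := by
      rcases hyy with h | h
      · exact ⟨y', hxy.trans h, hxy'⟩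
      · exact ⟨y, hxy, hxy'.trans h⟩
    obtain ⟨z, hz0, hz1⟩ := hz
    have e0 := List.prefix_iff_eq_take.1 hz0
    have e1 := List.prefix_iff_eq_take.1 hz1
    have : x ++ [false] = x ++ [true] := by
      rw [e0, e1]; simp
    simp at this
  have hsemi : ∀ x : List Bool,
      Qfn μ ψ (x ++ [false]) + Qfn μ ψ (x ++ [true]) ≤ Qfn μ ψ x := by
    intro x
    rw [hQdef, hQdef, hQdef, ← ENNReal.toReal_add (hne _) (hne _)]
    apply ENNReal.toReal_mono (hne _)
    rw [← measure_union (hdisj x) (hUm _)]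
    exact measure_mono (Set.union_subset (hUmono x false) (hUmono x true))
  have hlb : ∀ x : List Bool, (2 : ℝ) ^ ((x.length : ℤ) - Km x) ≤ Mfn μ ψ x := by
    intro x
    obtain ⟨p, y, hy, hxy, hp⟩ := hKm₁ x
    have hsub : Cyl p ⊆ U x := Set.subset_biUnion_of_mem (show p ∈ S x from ⟨y, hy, hxy⟩)
    have h1 : (2 : ℝ) ^ (-(Km x : ℤ)) ≤ Qfn μ ψ x := by
      have hmle := ENNReal.toReal_mono (hne x) (measure_mono hsub)
      rw [hμ p, hp] at hmle
      calc (2 : ℝ) ^ (-(Km x : ℤ)) = ((2 : ENNReal)⁻¹ ^ Km x).toReal := by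
            rw [ENNReal.toReal_pow, ENNReal.toReal_inv]
            rw [zpow_neg, zpow_natCast, ← inv_pow]
            norm_num
      _ ≤ _ := hmle
    have h2 : (2 : ℝ) ^ ((x.length : ℤ) - Km x)
        = 2 ^ x.length * (2 : ℝ) ^ (-(Km x : ℤ)) := by
      rw [sub_eq_add_neg, zpow_add₀ (two_ne_zero), zpow_natCast]
    rw [h2, Mfn]
    exact mul_le_mul_of_nonneg_left h1 (by positivity)
  refine ⟨hQ1 [], hsemi, ?_, ?_, hlb, ?_⟩
  · have := hQ1 []
    simpa [Mfn] using this
  · intro x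
    have := hsemi x
    simp only [Mfn, List.length_append, List.length_singleton]
    rw [pow_succ]
    nlinarith [this, pow_pos (show (0:ℝ) < 2 by norm_num) x.length]
  · intro x
    have h := hlb x
    have hpos : (0 : ℝ) < 2 ^ ((x.length : ℤ) - Km x) := by positivity
    calc (x.length : ℝ) - Km x
        = Real.logb 2 ((2 : ℝ) ^ ((x.length : ℤ) - Km x)) := by
          rw [Real.logb, Real.log_zpow, mul_div_assoc,
            div_self (Real.log_ne_zero_of_pos_of_ne_one two_pos (by norm_num)), mul_one]
          push_cast; ring
    _ ≤ Real.logb 2 (Mfn μ ψ x) := Real.logb_le_logb_of_le one_lt_two hpos h
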